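/- arXiv:2005.03099 — 3 statements merged into one kernel-verified Lean document; each statement's English description precedes it below -/
import Mathlib

section
/- For an elementary symmetric set, the center minimizes the sum of ν-th powers of distances: if ‖a − x_k‖ = d for all k = 1,…,N where a = (1/N)Σ_k x_k, and ν ≥ 2, then a minimizes F(c) = Σ_k ‖c − x_k‖^ν over ℝ^n. -/
/-!
Write `g k = ‖c - x k‖²`. Since `a` is the centroid, the parallel axis theorem gives
`∑ g = N d² + N ‖c - a‖² ≥ N d²`, so the mean of the `g k` is at least `d²`. As `t ↦ t ^ (ν / 2)` is
convex for `ν ≥ 2`, the mean of the `g k ^ (ν / 2) = ‖c - x k‖ ^ ν` is then at least `d ^ ν`,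
which is the mean of the `‖a - x k‖ ^ ν`.
-/

open Finset Real

theorem sum_norm_sub_sq_eq_sum_norm_sub_sq_add_card_mul {ι E : Type*} [NormedAddCommGroup E]
    [InnerProductSpace ℝ E] (s : Finset ι) (x : ι → E) {a : E} (ha : ∑ i ∈ s, (a - x i) = 0)
    (c : E) :
    ∑ i ∈ s, ‖c - x i‖ ^ 2 = ∑ i ∈ s, ‖a - x i‖ ^ 2 + #s * ‖c - a‖ ^ 2 := by
  have hsplit : ∀ i, ‖c - x i‖ ^ 2 = ‖c - a‖ ^ 2 + 2 * inner ℝ (c - a) (a - x i) + ‖a - x i‖ ^ 2 := by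
    intro i
    rw [← norm_add_sq_real, sub_add_sub_cancel]
  simp only [hsplit, sum_add_distrib, ← mul_sum, ← inner_sum, ha, inner_zero_right, mul_zero,
    add_zero, sum_const, nsmul_eq_mul]
  ring

theorem card_mul_rpow_le_sum_rpow {ι : Type*} (s : Finset ι) {f : ι → ℝ} {t p : ℝ} (hp : 1 ≤ p)
    (ht : 0 ≤ t) (hf : ∀ i ∈ s, 0 ≤ f i) (h : #s * t ≤ ∑ i ∈ s, f i) :
    #s * t ^ p ≤ ∑ i ∈ s, f i ^ p := by
  rcases s.eq_empty_or_nonempty with rfl | hs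
  · simp
  have hN : (0 : ℝ) < #s := by exact_mod_cast hs.card_pos
  have hpow : (#s : ℝ) ^ p * t ^ p ≤ (#s : ℝ) ^ (p - 1) * ∑ i ∈ s, f i ^ p :=
    calc (#s : ℝ) ^ p * t ^ p = (#s * t) ^ p := (mul_rpow hN.le ht).symm
      _ ≤ (∑ i ∈ s, f i) ^ p := rpow_le_rpow (by positivity) h (by linarith)
      _ ≤ (#s : ℝ) ^ (p - 1) * ∑ i ∈ s, f i ^ p := rpow_sum_le_const_mul_sum_rpow_of_nonneg s hp hf
  rw [rpow_sub_one hN.ne', div_mul_eq_mul_div, le_div_iff₀ hN, mul_right_comm] at hpow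
  exact le_of_mul_le_mul_left (by linarith) (rpow_pos_of_pos hN p)

theorem stmt_12 (n N : ℕ) (hN : 1 ≤ N) (x : Fin N → EuclideanSpace ℝ (Fin n))
    (a : EuclideanSpace ℝ (Fin n)) (ha : a = (N : ℝ)⁻¹ • ∑ k, x k)
    (d : ℝ) (hd : ∀ k, ‖a - x k‖ = d)
    (ν : ℝ) (hν : 2 ≤ ν)
    (F : EuclideanSpace ℝ (Fin n) → ℝ)
    (hF : ∀ c, F c = ∑ k, ‖c - x k‖ ^ ν) :
    ∀ c, F a ≤ F c := by
  intro c
  have hNpos : (0 : ℝ) < N := by exact_mod_cast hN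
  have hd0 : 0 ≤ d := hd ⟨0, hN⟩ ▸ norm_nonneg _
  have hcentroid : ∑ k, (a - x k) = 0 := by
    rw [sum_sub_distrib, sum_const, card_univ, Fintype.card_fin, ha, ← Nat.cast_smul_eq_nsmul ℝ,
      smul_smul, mul_inv_cancel₀ hNpos.ne', one_smul, sub_self]
  have hsq : #(univ : Finset (Fin N)) * d ^ 2 ≤ ∑ k, ‖c - x k‖ ^ 2 := by
    rw [sum_norm_sub_sq_eq_sum_norm_sub_sq_add_card_mul _ x hcentroid]
    simp only [hd, sum_const, nsmul_eq_mul]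
    exact le_add_of_nonneg_right (by positivity)
  have hmean := card_mul_rpow_le_sum_rpow univ (p := ν / 2) (by linarith) (sq_nonneg d)
    (fun _ _ ↦ sq_nonneg _) hsq
  simp only [rpow_div_two_eq_sqrt _ (sq_nonneg _), sqrt_sq hd0, sqrt_sq (norm_nonneg _)] at hmean
  simpa [hF, hd] using hmean
end

section
/- Elevated distance strict convexity: for h ≠ 0 and ν ≥ 1, the function f(c) = (‖c − x‖² + h²)^{ν/2} is strictly convex on ℝ^n. -/
/-!
Lift `c` to the point `(c - x, h)` of `E × ℝ` with the Euclidean norm: `f` is the `ν`-th power of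
the norm along this affine lift. Lifted points lie on the hyperplane at height `h ≠ 0`, which meets
every ray at most once, so the triangle inequality is strict between distinct lifted points; the
convexity and monotonicity of `t ↦ t ^ ν` carry the strict inequality to `f`.
-/

open Set

theorem norm_smul_add_smul_rpow_lt {F : Type*} [NormedAddCommGroup F] [NormedSpace ℝ F]
    [StrictConvexSpace ℝ F] {u v : F} (huv : ¬SameRay ℝ u v) {ν : ℝ} (hν : 1 ≤ ν)
    {a b : ℝ} (ha : 0 < a) (hb : 0 < b) (hab : a + b = 1) :
    ‖a • u + b • v‖ ^ ν < a * ‖u‖ ^ ν + b * ‖v‖ ^ ν := by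
  have hray : ¬SameRay ℝ (a • u) (b • v) := fun h => huv <| by
    simpa [smul_smul, ha.ne', hb.ne'] using
      (h.pos_smul_left (inv_pos.2 ha)).pos_smul_right (inv_pos.2 hb)
  have hnorm : ‖a • u + b • v‖ < a * ‖u‖ + b * ‖v‖ := by
    simpa [norm_smul, abs_of_pos ha, abs_of_pos hb] using norm_add_lt_of_not_sameRay hray
  calc ‖a • u + b • v‖ ^ ν < (a * ‖u‖ + b * ‖v‖) ^ ν :=
        Real.rpow_lt_rpow (norm_nonneg _) hnorm (by linarith)
    _ ≤ a * ‖u‖ ^ ν + b * ‖v‖ ^ ν :=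
        (convexOn_rpow hν).2 (norm_nonneg u) (norm_nonneg v) ha.le hb.le hab

theorem WithLp.eq_of_sameRay_of_snd_eq {p : ENNReal} {E : Type*} [AddCommGroup E] [Module ℝ E]
    {u v : WithLp p (E × ℝ)} (huv : SameRay ℝ u v) (hsnd : u.snd = v.snd) (hv : v.snd ≠ 0) :
    u = v := by
  have hu : u ≠ 0 := by rintro rfl; exact hv hsnd.symm
  have hv' : v ≠ 0 := by rintro rfl; exact hv rfl
  obtain ⟨r, -, rfl⟩ := huv.exists_pos_right hu hv'
  have hr : r = 1 := (mul_eq_right₀ hv).1 hsnd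
  rw [hr, one_smul]

theorem strictConvexOn_sq_norm_add_sq_rpow {E : Type*} [NormedAddCommGroup E]
    [InnerProductSpace ℝ E] {h : ℝ} (hh : h ≠ 0) {ν : ℝ} (hν : 1 ≤ ν) :
    StrictConvexOn ℝ univ fun v : E => (‖v‖ ^ 2 + h ^ 2) ^ (ν / 2) := by
  let lift : E → WithLp 2 (E × ℝ) := fun v => WithLp.toLp 2 (v, h)
  have hlift : ∀ v, (‖v‖ ^ 2 + h ^ 2) ^ (ν / 2) = ‖lift v‖ ^ ν := fun v => by
    rw [Real.rpow_div_two_eq_sqrt _ (by positivity), WithLp.prod_norm_eq_of_L2]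
    simp [lift]
  refine ⟨convex_univ, fun v₁ _ v₂ _ hne a b ha hb hab => ?_⟩
  have hcombo : lift (a • v₁ + b • v₂) = a • lift v₁ + b • lift v₂ := by
    simp [lift, ← WithLp.toLp_smul, ← WithLp.toLp_add, ← add_mul, hab]
  simp only [hlift, hcombo, smul_eq_mul]
  refine norm_smul_add_smul_rpow_lt (fun hray => hne ?_) hν ha hb hab
  simpa [lift] using congrArg WithLp.fst (WithLp.eq_of_sameRay_of_snd_eq hray rfl hh)

theorem stmt_14 (n : ℕ) (x : EuclideanSpace ℝ (Fin n)) (h : ℝ) (hh : h ≠ 0)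
    (ν : ℝ) (hν : 1 ≤ ν) :
    StrictConvexOn ℝ Set.univ
      (fun c : EuclideanSpace ℝ (Fin n) => (‖c - x‖ ^ 2 + h ^ 2) ^ (ν / 2)) := by
  simpa [Function.comp_def, neg_add_eq_sub] using
    (strictConvexOn_sq_norm_add_sq_rpow (E := EuclideanSpace ℝ (Fin n)) hh hν).translate_right (-x)
end

section
/- Uniqueness for elevated BS: for h ≠ 0, ν_k ≥ 1, β_k > 0, the function F(c) = Σ_k β_k (‖c − x_k‖² + h²)^{ν_k/2} has a unique global minimizer on ℝ^n. -/
/-!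
Write `(v, h)` for a point of `ℝⁿ × ℝ` with the Euclidean norm. The `k`-th summand of `F` is
`β_k ‖(c - x_k, h)‖ ^ ν_k`, and as `c` varies the points `(c - x_k, h)` run through an affine
hyperplane that misses the origin because `h ≠ 0`. Hence no two of them lie on a common ray, so the
strict triangle inequality of the Euclidean norm makes `c ↦ ‖(c - x_k, h)‖` strictly convex; raising
to the power `ν_k ≥ 1` and summing with positive weights keeps strict convexity, which gives
uniqueness of the minimizer. The summands grow like `‖c‖ ^ ν_k`, so `F` is coercive, and being
convex it is continuous, hence attains its minimum.
-/

open Filter Set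

section StrictConvexOn

variable {E : Type*} [AddCommGroup E] [Module ℝ E] {s : Set E}

theorem StrictConvexOn.const_mul {f : E → ℝ} {c : ℝ} (hc : 0 < c) (hf : StrictConvexOn ℝ s f) :
    StrictConvexOn ℝ s fun x => c * f x :=
  ⟨hf.1, fun x hx y hy hxy a b ha hb hab => by
    have := mul_lt_mul_of_pos_left (hf.2 hx hy hxy ha hb hab) hc
    simp only [smul_eq_mul] at this ⊢
    linarith⟩

theorem StrictConvexOn.finset_sum {ι : Type*} {t : Finset ι} {f : ι → E → ℝ} (ht : t.Nonempty)
    (hf : ∀ i ∈ t, StrictConvexOn ℝ s (f i)) : StrictConvexOn ℝ s fun x => ∑ i ∈ t, f i x := by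
  obtain ⟨i, hi⟩ := ht
  refine ⟨(hf i hi).1, fun x hx y hy hxy a b ha hb hab => ?_⟩
  simp only [smul_eq_mul, Finset.mul_sum, ← Finset.sum_add_distrib]
  exact Finset.sum_lt_sum_of_nonempty ⟨i, hi⟩ fun j hj => (hf j hj).2 hx hy hxy ha hb hab

theorem StrictConvexOn.rpow {f : E → ℝ} (hf : StrictConvexOn ℝ s f) (hf₀ : ∀ x ∈ s, 0 ≤ f x)
    {p : ℝ} (hp : 1 ≤ p) :
    StrictConvexOn ℝ s fun x => f x ^ p := by
  refine ⟨hf.1, fun x hx y hy hxy a b ha hb hab => ?_⟩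
  calc f (a • x + b • y) ^ p < (a • f x + b • f y) ^ p :=
        Real.rpow_lt_rpow (hf₀ _ (hf.1 hx hy ha.le hb.le hab)) (hf.2 hx hy hxy ha hb hab)
          (by linarith)
    _ ≤ a • f x ^ p + b • f y ^ p :=
        (convexOn_rpow hp).2 (hf₀ x hx) (hf₀ y hy) ha.le hb.le hab

end StrictConvexOn

theorem Real.sq_rpow_div_two {x : ℝ} (hx : 0 ≤ x) (p : ℝ) : (x ^ 2) ^ (p / 2) = x ^ p := by
  rw [← Real.rpow_natCast_mul hx]
  push_cast
  ring_nf

theorem not_sameRay_add_of_notMem_range {E G : Type*} [AddCommGroup E] [Module ℝ E]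
    [AddCommGroup G] [Module ℝ G] {L : E →ₗ[ℝ] G} (hL : Function.Injective L) {w : G}
    (hw : w ∉ LinearMap.range L) {p q : E} (hpq : p ≠ q) : ¬SameRay ℝ (L p + w) (L q + w) := by
  have hne : ∀ c, L c + w ≠ 0 := fun c h0 =>
    hw ⟨-c, by rw [map_neg, neg_eq_iff_add_eq_zero, h0]⟩
  intro hray
  obtain ⟨r₁, r₂, -, hr₂, hr⟩ := hray.exists_pos (hne p) (hne q)
  have hw_smul : (r₁ - r₂) • w = L (r₂ • q - r₁ • p) := by
    rw [map_sub, map_smul, map_smul]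
    linear_combination (norm := module) hr
  obtain rfl | hr₁₂ := eq_or_ne r₁ r₂
  · exact hpq (hL (add_right_cancel (smul_right_injective G hr₂.ne' hr)))
  · refine hw ⟨(r₁ - r₂)⁻¹ • (r₂ • q - r₁ • p), ?_⟩
    rw [map_smul, ← hw_smul, inv_smul_smul₀ (sub_ne_zero.2 hr₁₂)]

theorem strictConvexOn_norm_add_of_notMem_range {E G : Type*} [AddCommGroup E] [Module ℝ E]
    [NormedAddCommGroup G] [NormedSpace ℝ G] [StrictConvexSpace ℝ G] {L : E →ₗ[ℝ] G}
    (hL : Function.Injective L) {w : G} (hw : w ∉ LinearMap.range L) :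
    StrictConvexOn ℝ univ fun c => ‖L c + w‖ := by
  refine ⟨convex_univ, fun p _ q _ hpq a b ha hb hab => ?_⟩
  have hcombo : L (a • p + b • q) + w = a • (L p + w) + b • (L q + w) := by
    rw [map_add, map_smul, map_smul]
    linear_combination (norm := module) -hab • w
  have hray : ¬SameRay ℝ (a • (L p + w)) (b • (L q + w)) := fun hray => by
    refine not_sameRay_add_of_notMem_range hL hw hpq ?_
    simpa [inv_smul_smul₀ ha.ne', inv_smul_smul₀ hb.ne'] using
      (hray.pos_smul_left (inv_pos.2 ha)).pos_smul_right (inv_pos.2 hb)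
  have := norm_add_lt_of_not_sameRay hray
  rwa [norm_smul, norm_smul, Real.norm_of_nonneg ha.le, Real.norm_of_nonneg hb.le,
    ← hcombo] at this

theorem strictConvexOn_rpow_norm_sub_sq_add_sq {E : Type*} [NormedAddCommGroup E]
    [InnerProductSpace ℝ E] {h ν : ℝ} (hh : h ≠ 0) (hν : 1 ≤ ν) (a : E) :
    StrictConvexOn ℝ univ fun c : E => (‖c - a‖ ^ 2 + h ^ 2) ^ (ν / 2) := by
  let L : E →ₗ[ℝ] WithLp 2 (E × ℝ) :=
    (WithLp.linearEquiv 2 ℝ (E × ℝ)).symm.toLinearMap ∘ₗ LinearMap.inl ℝ E ℝ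
  let w : WithLp 2 (E × ℝ) := WithLp.toLp 2 (-a, h)
  have hL : Function.Injective L := fun p q hpq => by
    simpa [L] using congrArg (fun v : WithLp 2 (E × ℝ) => v.fst) hpq
  have hw : w ∉ LinearMap.range L := by
    rintro ⟨c, hc⟩
    exact hh (by simpa [L, w] using (congrArg (fun v : WithLp 2 (E × ℝ) => v.snd) hc).symm)
  have hnorm (c : E) : (‖c - a‖ ^ 2 + h ^ 2) ^ (ν / 2) = ‖L c + w‖ ^ ν := by
    have hsq : ‖L c + w‖ ^ 2 = ‖c - a‖ ^ 2 + h ^ 2 := by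
      simp [WithLp.prod_norm_sq_eq_of_L2, L, w, sub_eq_add_neg]
    rw [← hsq, Real.sq_rpow_div_two (norm_nonneg _)]
  exact ((strictConvexOn_norm_add_of_notMem_range hL hw).rpow (fun _ _ => norm_nonneg _)
    hν).congr fun c _ => (hnorm c).symm

theorem tendsto_rpow_norm_sub_sq_add_sq_cocompact {E : Type*} [NormedAddCommGroup E]
    [ProperSpace E] (h : ℝ) {ν : ℝ} (hν : 0 < ν) (a : E) :
    Tendsto (fun c : E => (‖c - a‖ ^ 2 + h ^ 2) ^ (ν / 2)) (cocompact E) atTop := by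
  have hdist : Tendsto (fun c : E => ‖c - a‖) (cocompact E) atTop :=
    tendsto_atTop_mono (fun c => by simpa [sub_eq_add_neg] using norm_sub_norm_le c a)
      (tendsto_atTop_add_const_right _ (-‖a‖) tendsto_norm_cocompact_atTop)
  refine tendsto_atTop_mono (fun c => ?_) ((tendsto_rpow_atTop hν).comp hdist)
  calc ‖c - a‖ ^ ν = (‖c - a‖ ^ 2) ^ (ν / 2) := (Real.sq_rpow_div_two (norm_nonneg _) ν).symm
    _ ≤ (‖c - a‖ ^ 2 + h ^ 2) ^ (ν / 2) := by gcongr; nlinarith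

theorem stmt_15 (n N : ℕ) (hN : 1 ≤ N) (x : Fin N → EuclideanSpace ℝ (Fin n))
    (β ν : Fin N → ℝ) (hβ : ∀ k, 0 < β k) (hν : ∀ k, 1 ≤ ν k)
    (h : ℝ) (hh : h ≠ 0)
    (F : EuclideanSpace ℝ (Fin n) → ℝ)
    (hF : ∀ c, F c = ∑ k, β k * (‖c - x k‖ ^ 2 + h ^ 2) ^ (ν k / 2)) :
    ∃! cstar, ∀ c, F cstar ≤ F c := by
  have hFeq : F = fun c => ∑ k, β k * (‖c - x k‖ ^ 2 + h ^ 2) ^ (ν k / 2) := funext hF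
  let k₀ : Fin N := ⟨0, hN⟩
  have hconvex : StrictConvexOn ℝ univ F := by
    rw [hFeq]
    exact .finset_sum ⟨k₀, Finset.mem_univ _⟩ fun k _ =>
      (strictConvexOn_rpow_norm_sub_sq_add_sq hh (hν k) (x k)).const_mul (hβ k)
  have hcont : Continuous F :=
    continuousOn_univ.1 (hconvex.convexOn.continuousOn isOpen_univ)
  have hcoercive : Tendsto F (cocompact _) atTop := by
    refine tendsto_atTop_mono (fun c => ?_) ((tendsto_rpow_norm_sub_sq_add_sq_cocompact h
      (one_pos.trans_le (hν k₀)) (x k₀)).const_mul_atTop (hβ k₀))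
    rw [hF]
    exact Finset.single_le_sum (f := fun k => β k * (‖c - x k‖ ^ 2 + h ^ 2) ^ (ν k / 2))
      (fun k _ => mul_nonneg (hβ k).le (by positivity)) (Finset.mem_univ k₀)
  obtain ⟨c, hc⟩ := hcont.exists_forall_le hcoercive
  exact ⟨c, hc, fun d hd =>
    hconvex.eq_of_isMinOn (fun y _ => hd y) (fun y _ => hc y) trivial trivial⟩
end
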